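/- arXiv:1507.01744 — 5 statements merged into one kernel-verified Lean document; each statement's English description precedes it below -/
import Mathlib

section
/- (Lemma 4.7, commutativity of the corner square of the Hochschild–Chevalley bicomplex) Let G be a Gerstenhaber algebra and f : G → G a k-linear map homogeneous of degree f̃. Then for all homogeneous x, y, z in G one has d_CH^{01}(d_H^{00} f)(x; y, z) = d_H^{10}(d_CH^{00} f)(x, y, z), where the four differentials are defined in the context. -/
/-- A Gerstenhaber bracket on a ℤ-graded (graded-commutative) associative unital
`k`-algebra `A` with grading `𝒜`: a `k`-bilinear bracket of degree `-1` satisfying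
graded antisymmetry (G1), the graded Jacobi identity (G2) and the graded Leibniz
(odd Poisson) rule (G3); graded commutativity of the product is also recorded. -/
structure GerstenhaberBracket (k A : Type) [Field k] [CharZero k] [Ring A] [Algebra k A]
    (𝒜 : ℤ → Submodule k A) [GradedAlgebra 𝒜] where
  br : A →ₗ[k] A →ₗ[k] A
  br_mem : ∀ {i j : ℤ} {x y : A}, x ∈ 𝒜 i → y ∈ 𝒜 j → br x y ∈ 𝒜 (i + j - 1)
  gcomm : ∀ {i j : ℤ} {x y : A}, x ∈ 𝒜 i → y ∈ 𝒜 j →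
    x * y = ((-1 : k) ^ (i * j)) • (y * x)
  g1 : ∀ {i j : ℤ} {x y : A}, x ∈ 𝒜 i → y ∈ 𝒜 j →
    br x y = -(((-1 : k) ^ ((i - 1) * (j - 1))) • br y x)
  g2 : ∀ {i j l : ℤ} {x y z : A}, x ∈ 𝒜 i → y ∈ 𝒜 j → z ∈ 𝒜 l →
    br x (br y z) = br (br x y) z + ((-1 : k) ^ ((i - 1) * (j - 1))) • br y (br x z)
  g3 : ∀ {i j l : ℤ} {x y z : A}, x ∈ 𝒜 i → y ∈ 𝒜 j → z ∈ 𝒜 l →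
    br x (y * z) = br x y * z + ((-1 : k) ^ (j * (i - 1))) • (y * br x z)

section CornerSquare

variable {k A : Type} [Field k] [CharZero k] [Ring A] [Algebra k A]

/-- `(d_H^{00}f)(x,y)` for a linear `f` of degree `d`, where `i = |x|`:
`(−1)^{|x|(f̃+1)+f̃} x f(y) + (−1)^{f̃+|x|+1} f(xy) + (−1)^{f̃+|x|} f(x)y`. -/
def dH00 (f : A → A) (d i : ℤ) (x y : A) : A :=
  ((-1 : k) ^ (i * (d + 1) + d)) • (x * f y) + ((-1 : k) ^ (d + i + 1)) • f (x * y)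
    + ((-1 : k) ^ (d + i)) • (f x * y)

/-- `(d_CH^{00}f)(x,y)` for a linear `f` of degree `d`, where `i = |x|`:
`(−1)^{(|x|−1)f̃}[x, f(y)] + [f(x), y] − f([x,y])`. -/
def dCH00 (br : A → A → A) (f : A → A) (d i : ℤ) (x y : A) : A :=
  ((-1 : k) ^ ((i - 1) * d)) • br x (f y) + br (f x) y - f (br x y)

/-- `(d_CH^{01}g)(x; y, z)` for a bilinear `g` of degree `gd`; the function `g` is given
together with the degree of its first argument (first parameter of `g`), and
`i = |x|`, `j = |y|`:
`(−1)^{(|x|−1)(g̃+1)}[x, g(y,z)] − g([x,y], z) − (−1)^{(|x|−1)(|y|−1)} g(y, [x,z])`. -/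
def dCH01 (br : A → A → A) (g : ℤ → A → A → A) (gd i j : ℤ) (x y z : A) : A :=
  ((-1 : k) ^ ((i - 1) * (gd + 1))) • br x (g j y z) - g (i + j - 1) (br x y) z
    - ((-1 : k) ^ ((i - 1) * (j - 1))) • g j y (br x z)

/-- `(d_H^{10}g)(x, y, z)` for a bilinear `g` of degree `gd`; the function `g` is given
together with the degree of its first argument, and `i = |x|`, `j = |y|`:
`(−1)^{|y|(g̃+|x|+1)+g̃+|x|} y g(x,z) + (−1)^{g̃+|x|+|y|+1} g(x, yz) + (−1)^{g̃+|x|+|y|} g(x,y)z`. -/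
def dH10 (g : ℤ → A → A → A) (gd i j : ℤ) (x y z : A) : A :=
  ((-1 : k) ^ (j * (gd + i + 1) + gd + i)) • (y * g i x z)
    + ((-1 : k) ^ (gd + i + j + 1)) • g i x (y * z)
    + ((-1 : k) ^ (gd + i + j)) • (g i x y * z)

end CornerSquare

lemma neg_one_zpow_eq (k : Type) [Field k] {a b : ℤ} (h : Even (a - b)) :
    (-1 : k)^a = (-1 : k)^b := by
  obtain ⟨t, ht⟩ := h
  have hab : a = b + 2 * t := by omega
  rw [hab, zpow_add₀ (by norm_num : (-1:k) ≠ 0), zpow_mul]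
  norm_num

lemma neg_one_zpow_odd (k : Type) [Field k] {a b : ℤ} (h : Odd (a - b)) :
    (-1 : k)^a = -(-1 : k)^b := by
  obtain ⟨t, ht⟩ := h
  have hab : a = b + 2 * t + 1 := by omega
  rw [hab, zpow_add₀ (by norm_num : (-1:k) ≠ 0), zpow_add₀ (by norm_num : (-1:k) ≠ 0), zpow_mul]
  norm_num

set_option maxHeartbeats 2000000 in
/-- Lemma 4.7: commutativity of the corner square of the
Hochschild–Chevalley bicomplex: `d_CH^{01}(d_H^{00} f) = d_H^{10}(d_CH^{00} f)`
on homogeneous `x, y, z`, for any `k`-linear `f : G → G` homogeneous of degree `d`. -/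
theorem corner_square_commutes
    (k A : Type) [Field k] [CharZero k] [Ring A] [Algebra k A]
    (𝒜 : ℤ → Submodule k A) [GradedAlgebra 𝒜]
    (G : GerstenhaberBracket k A 𝒜)
    (f : A →ₗ[k] A) (d : ℤ)
    (hf : ∀ (i : ℤ) (x : A), x ∈ 𝒜 i → f x ∈ 𝒜 (i + d))
    {i j l : ℤ} {x y z : A} (hx : x ∈ 𝒜 i) (hy : y ∈ 𝒜 j) (hz : z ∈ 𝒜 l) :
    dCH01 (k := k) (fun u v => G.br u v) (fun m u v => dH00 (k := k) (fun w => f w) d m u v)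
        d i j x y z
      = dH10 (k := k) (fun m u v => dCH00 (k := k) (fun u v => G.br u v) (fun w => f w) d m u v)
        (d - 1) i j x y z := by
  have e1 := G.g3 hx hy (hf l z hz)
  have e2 := G.g3 hx (hf j y hy) hz
  have e3 := G.g3 (hf i x hx) hy hz
  have e4 := G.g3 hx hy hz
  simp only [dCH01, dH00, dH10, dCH00, map_add, map_smul, LinearMap.add_apply,
    LinearMap.smul_apply, map_sub, LinearMap.sub_apply]
  rw [e1, e2, e3, e4]
  simp only [map_add, map_smul, smul_add, mul_add, add_mul, mul_sub, sub_mul,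
    smul_mul_assoc, mul_smul_comm, smul_smul, smul_sub]
  match_scalars
  all_goals simp only [← zpow_add₀ (show (-1:k) ≠ 0 by norm_num), mul_one, one_mul]
  all_goals
    first
    | exact neg_one_zpow_eq k (by simp [parity_simps, ← Int.not_even_iff_odd]; try tauto)
    | (rw [sub_eq_zero];
       exact neg_one_zpow_eq k (by simp [parity_simps, ← Int.not_even_iff_odd]; try tauto))
    | (rw [neg_inj];
       exact neg_one_zpow_eq k (by simp [parity_simps, ← Int.not_even_iff_odd]; try tauto))
    | (rw [eq_comm, add_eq_zero_iff_eq_neg];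
       exact neg_one_zpow_odd k (by simp [parity_simps, ← Int.not_even_iff_odd]; try tauto))
end

section
/- (Lemma 5.3) Let G be a Gerstenhaber algebra and Δ : G → G a k-linear operator, homogeneous of degree −1, satisfying (BV1). Then for all homogeneous x, y in G: (−1)^{|x|+1}[x, Δ(y)] + [Δ(x), y] − Δ([x, y]) = (−1)^{|x|+1}( Δ²(xy) − Δ²(x)y − xΔ²(y) ), where Δ² = Δ∘Δ. -/
/-- Lemma 5.3: if `Δ` is `k`-linear, homogeneous of degree `−1` and
satisfies (BV1), then for homogeneous `x, y`:
`(−1)^{|x|+1}[x, Δ(y)] + [Δ(x), y] − Δ([x,y])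
  = (−1)^{|x|+1}(Δ²(xy) − Δ²(x)y − xΔ²(y))`. -/
theorem lemma_5_3
    (k A : Type) [Field k] [CharZero k] [Ring A] [Algebra k A]
    (𝒜 : ℤ → Submodule k A) [GradedAlgebra 𝒜]
    (G : GerstenhaberBracket k A 𝒜)
    (Δ : A →ₗ[k] A)
    (hdeg : ∀ (i : ℤ) (x : A), x ∈ 𝒜 i → Δ x ∈ 𝒜 (i - 1))
    (hBV1 : ∀ (i j : ℤ) (x y : A), x ∈ 𝒜 i → y ∈ 𝒜 j →
      Δ (x * y) - Δ x * y - ((-1 : k) ^ i) • (x * Δ y) = ((-1 : k) ^ i) • G.br x y)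
    {i j : ℤ} {x y : A} (hx : x ∈ 𝒜 i) (hy : y ∈ 𝒜 j) :
    ((-1 : k) ^ (i + 1)) • G.br x (Δ y) + G.br (Δ x) y - Δ (G.br x y)
      = ((-1 : k) ^ (i + 1)) • (Δ (Δ (x * y)) - Δ (Δ x) * y - x * Δ (Δ y)) := by
  have hne : (-1:k) ≠ 0 := by norm_num
  set e : k := (-1:k)^i with he
  have hi1 : (-1:k)^(i+1) = -e := by rw [he, zpow_add_one₀ hne]; ring
  have hi2 : (-1:k)^(i-1) = -e := by rw [he, zpow_sub_one₀ hne, inv_neg, inv_one, mul_neg, mul_one]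
  have hee : e * e = 1 := by
    rw [he, ← zpow_add₀ hne, ← two_mul, zpow_mul]; norm_num
  have h1 := hBV1 i j x y hx hy
  have h2 := hBV1 (i-1) j (Δ x) y (hdeg i x hx) hy
  have h3 := hBV1 i (j-1) x (Δ y) hx (hdeg j y hy)
  rw [hi2] at h2
  rw [hi1]
  have hD1 : Δ (Δ (x*y)) - Δ (Δ x * y) - e • Δ (x * Δ y) = e • Δ (G.br x y) := by
    have := congrArg Δ h1
    simpa [map_sub, map_smul] using this
  have hD1' : e • Δ (Δ (x*y)) - e • Δ (Δ x * y) - Δ (x * Δ y) = Δ (G.br x y) := by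
    have h := congrArg (fun z => e • z) hD1
    simpa [smul_sub, smul_smul, hee] using h
  have h2' : e • Δ (Δ x * y) - e • (Δ (Δ x) * y) + (Δ x * Δ y) = -G.br (Δ x) y := by
    have h := congrArg (fun z => e • z) h2
    simp only [smul_sub, smul_smul, hee, one_smul, smul_neg, neg_smul] at h
    linear_combination (norm := module) h
  linear_combination (norm := module) hD1' + h2' + h3
end

section
/- (Equivalence of (qBV2)′ and (qBV2)) Let G be a Gerstenhaber algebra and Δ : G → G a k-linear operator, homogeneous of degree −1, satisfying (BV1). Then Δ is a derivation of the graded Lie bracket, i.e. Δ([x,y]) = [Δ(x), y] + (−1)^{|x|−1}[x, Δ(y)] for all homogeneous x,y, if and only if Δ² = Δ∘Δ is a derivation of the product, i.e. Δ²(xy) = Δ²(x)y + xΔ²(y) for all homogeneous x,y. -/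
/-- for a `k`-linear `Δ`, homogeneous of degree `−1` and satisfying (BV1),
`Δ` is a derivation of the graded Lie bracket (qBV2)′ if and only if `Δ² = Δ∘Δ` is a
derivation of the product (qBV2). -/
theorem qBV2'_iff_qBV2
    (k A : Type) [Field k] [CharZero k] [Ring A] [Algebra k A]
    (𝒜 : ℤ → Submodule k A) [GradedAlgebra 𝒜]
    (G : GerstenhaberBracket k A 𝒜)
    (Δ : A →ₗ[k] A)
    (hdeg : ∀ (i : ℤ) (x : A), x ∈ 𝒜 i → Δ x ∈ 𝒜 (i - 1))
    (hBV1 : ∀ (i j : ℤ) (x y : A), x ∈ 𝒜 i → y ∈ 𝒜 j →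
      Δ (x * y) - Δ x * y - ((-1 : k) ^ i) • (x * Δ y) = ((-1 : k) ^ i) • G.br x y) :
    (∀ (i j : ℤ) (x y : A), x ∈ 𝒜 i → y ∈ 𝒜 j →
        Δ (G.br x y) = G.br (Δ x) y + ((-1 : k) ^ (i - 1)) • G.br x (Δ y))
      ↔ (∀ (i j : ℤ) (x y : A), x ∈ 𝒜 i → y ∈ 𝒜 j →
        Δ (Δ (x * y)) = Δ (Δ x) * y + x * Δ (Δ y)) := by
  have hne : ((-1 : k)) ≠ 0 := by norm_num
  have key : ∀ (i j : ℤ) (x y : A), x ∈ 𝒜 i → y ∈ 𝒜 j →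
      Δ (Δ (x * y)) - Δ (Δ x) * y - x * Δ (Δ y)
        = ((-1 : k) ^ i) • (Δ (G.br x y) - G.br (Δ x) y
            - ((-1 : k) ^ (i - 1)) • G.br x (Δ y)) := by
    intro i j x y hx hy
    have ha : ((-1 : k) ^ (i - 1)) = -((-1 : k) ^ i) := by
      rw [zpow_sub₀ hne]; field_simp
    have haa : ((-1 : k) ^ i) * ((-1 : k) ^ i) = 1 := by
      rw [← zpow_add₀ hne, ← two_mul, zpow_mul]; norm_num
    have h1 : Δ (x * y)
        = Δ x * y + ((-1 : k) ^ i) • (x * Δ y) + ((-1 : k) ^ i) • G.br x y := by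
      have h := hBV1 i j x y hx hy
      rw [sub_sub, sub_eq_iff_eq_add] at h
      rw [h]; abel
    have h2 : Δ (Δ x * y)
        = Δ (Δ x) * y + ((-1 : k) ^ (i - 1)) • (Δ x * Δ y)
          + ((-1 : k) ^ (i - 1)) • G.br (Δ x) y := by
      have h := hBV1 (i - 1) j (Δ x) y (hdeg i x hx) hy
      rw [sub_sub, sub_eq_iff_eq_add] at h
      rw [h]; abel
    have h3 : Δ (x * Δ y)
        = Δ x * Δ y + ((-1 : k) ^ i) • (x * Δ (Δ y))
          + ((-1 : k) ^ i) • G.br x (Δ y) := by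
      have h := hBV1 i (j - 1) x (Δ y) hx (hdeg j y hy)
      rw [sub_sub, sub_eq_iff_eq_add] at h
      rw [h]; abel
    rw [h1, map_add, map_add, map_smul, map_smul, h2, h3, ha]
    match_scalars <;> first
      | ring1
      | linear_combination haa
  constructor
  · intro h i j x y hx hy
    have hk := key i j x y hx hy
    rw [h i j x y hx hy] at hk
    have h0 : (G.br (Δ x) y + ((-1 : k) ^ (i - 1)) • G.br x (Δ y))
        - G.br (Δ x) y - ((-1 : k) ^ (i - 1)) • G.br x (Δ y) = 0 := by abel
    rw [h0, smul_zero, sub_sub, sub_eq_zero] at hk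
    exact hk
  · intro h i j x y hx hy
    have hk := key i j x y hx hy
    rw [h i j x y hx hy] at hk
    have h0 : (Δ (Δ x) * y + x * Δ (Δ y)) - Δ (Δ x) * y - x * Δ (Δ y) = 0 := by abel
    rw [h0] at hk
    have hz : ((-1 : k) ^ i) ≠ 0 := zpow_ne_zero i hne
    have := (smul_eq_zero.mp hk.symm).resolve_left hz
    rw [sub_sub, sub_eq_zero] at this
    exact this
end

section
/- Let G be a Gerstenhaber algebra with G^i = 0 for all i < 0, which is generated as a k-algebra by G^0 ∪ G^1. Then every quasi-BV structure Δ on G satisfies Δ∘Δ = 0; that is, for such G the axiom (qBV2) is equivalent to the Batalin–Vilkovisky axiom (BV2): Δ² = 0. -/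
theorem leibniz_of_leibniz_homogeneous {R A ι : Type*} [CommSemiring R] [Semiring A]
    [Algebra R A] [DecidableEq ι] (𝒜 : ι → Submodule R A) [DirectSum.Decomposition 𝒜]
    (D : A →ₗ[R] A)
    (hD : ∀ (i j : ι) (x y : A), x ∈ 𝒜 i → y ∈ 𝒜 j → D (x * y) = D x * y + x * D y)
    (x y : A) : D (x * y) = D x * y + x * D y := by
  induction x using DirectSum.Decomposition.inductionOn 𝒜 generalizing y with
  | zero => simp
  | homogeneous x =>
    induction y using DirectSum.Decomposition.inductionOn 𝒜 with
    | zero => simp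
    | homogeneous y => exact hD _ _ _ _ x.2 y.2
    | add y y' hy hy' =>
      simp only [mul_add, map_add, hy, hy']
      abel
  | add x x' hx hx' =>
    simp only [add_mul, map_add, hx, hx']
    abel

theorem eq_zero_of_mem_adjoin_of_leibniz {R A : Type*} [CommSemiring R] [Ring A] [Algebra R A]
    {s : Set A} (D : A →ₗ[R] A)
    (hD : ∀ x y : A, D (x * y) = D x * y + x * D y) (hs : ∀ x ∈ s, D x = 0)
    {x : A} (hx : x ∈ Algebra.adjoin R s) : D x = 0 := by
  have hone : D 1 = 0 := by simpa using (hD 1 1).symm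
  induction hx using Algebra.adjoin_induction with
  | mem x hx => exact hs x hx
  | algebraMap r => rw [Algebra.algebraMap_eq_smul_one, map_smul, hone, smul_zero]
  | add x y _ _ hx hy => rw [map_add, hx, hy, add_zero]
  | mul x y _ _ hx hy => rw [hD, hx, hy, zero_mul, mul_zero, add_zero]

theorem qBV_implies_BV_of_generated_in_low_degrees_general
    (k A : Type) [Field k] [Ring A] [Algebra k A]
    (𝒜 : ℤ → Submodule k A) [GradedAlgebra 𝒜]
    (hneg : ∀ i : ℤ, i < 0 → 𝒜 i = ⊥)
    (hgen : Algebra.adjoin k ((𝒜 0 : Set A) ∪ (𝒜 1 : Set A)) = ⊤)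
    (Δ : A →ₗ[k] A)
    (hdeg : ∀ (i : ℤ) (x : A), x ∈ 𝒜 i → Δ x ∈ 𝒜 (i - 1))
    (hqBV2 : ∀ (i j : ℤ) (x y : A), x ∈ 𝒜 i → y ∈ 𝒜 j →
      Δ (Δ (x * y)) = Δ (Δ x) * y + x * Δ (Δ y)) :
    ∀ x : A, Δ (Δ x) = 0 := by
  have hleib := leibniz_of_leibniz_homogeneous 𝒜 (Δ ∘ₗ Δ) hqBV2
  have hlow : ∀ i ≤ 1, ∀ x ∈ 𝒜 i, Δ (Δ x) = 0 := fun i hi x hx => by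
    simpa [hneg (i - 1 - 1) (by omega)] using hdeg _ _ (hdeg _ _ hx)
  intro x
  refine eq_zero_of_mem_adjoin_of_leibniz (Δ ∘ₗ Δ) hleib ?_ (hgen ▸ Algebra.mem_top)
  rintro y (hy | hy)
  exacts [hlow 0 zero_le_one y hy, hlow 1 le_rfl y hy]

/-- if `G` is a Gerstenhaber algebra concentrated in nonnegative degrees
and generated as a `k`-algebra by `G^0 ∪ G^1`, then every quasi-BV structure `Δ` on `G`
satisfies `Δ ∘ Δ = 0` (i.e. (qBV2) is equivalent to the BV axiom (BV2)). -/
theorem qBV_implies_BV_of_generated_in_low_degrees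
    (k A : Type) [Field k] [CharZero k] [Ring A] [Algebra k A]
    (𝒜 : ℤ → Submodule k A) [GradedAlgebra 𝒜]
    (G : GerstenhaberBracket k A 𝒜)
    (hneg : ∀ i : ℤ, i < 0 → 𝒜 i = ⊥)
    (hgen : Algebra.adjoin k ((𝒜 0 : Set A) ∪ (𝒜 1 : Set A)) = ⊤)
    (Δ : A →ₗ[k] A)
    (hdeg : ∀ (i : ℤ) (x : A), x ∈ 𝒜 i → Δ x ∈ 𝒜 (i - 1))
    (hBV1 : ∀ (i j : ℤ) (x y : A), x ∈ 𝒜 i → y ∈ 𝒜 j →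
      Δ (x * y) - Δ x * y - ((-1 : k) ^ i) • (x * Δ y) = ((-1 : k) ^ i) • G.br x y)
    (hqBV2 : ∀ (i j : ℤ) (x y : A), x ∈ 𝒜 i → y ∈ 𝒜 j →
      Δ (Δ (x * y)) = Δ (Δ x) * y + x * Δ (Δ y)) :
    ∀ x : A, Δ (Δ x) = 0 :=
  qBV_implies_BV_of_generated_in_low_degrees_general k A 𝒜 hneg hgen Δ hdeg hqBV2
end

section
/- (Torsor property of quasi-BV structures, translation) Let G be a Gerstenhaber algebra, Δ a quasi-BV structure on G, and ω : G → G a k-linear map homogeneous of degree −1 satisfying ω(xy) = ω(x)y + (−1)^{|x|} x ω(y) and ω([x,y]) = [ω(x), y] + (−1)^{|x|−1}[x, ω(y)] for all homogeneous x, y. Then Δ + ω is again a quasi-BV structure on G. -/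
section

variable {k A : Type} [Field k] [Ring A] [Algebra k A] (𝒜 : ℤ → Submodule k A)

lemma neg_one_zpow_sub_one (i : ℤ) : (-1 : k) ^ (i - 1) = -(-1 : k) ^ i := by
  rw [zpow_sub_one₀ (neg_ne_zero.mpr one_ne_zero)]
  simp

lemma neg_one_zpow_mul_self (i : ℤ) : (-1 : k) ^ i * (-1 : k) ^ i = 1 := by
  rw [← mul_zpow]
  simp

def IsEvenDerivation (D : A →ₗ[k] A) : Prop :=
  ∀ ⦃i j : ℤ⦄ ⦃x y : A⦄, x ∈ 𝒜 i → y ∈ 𝒜 j → D (x * y) = D x * y + x * D y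

def IsOddDerivation (D : A →ₗ[k] A) : Prop :=
  ∀ ⦃i j : ℤ⦄ ⦃x y : A⦄, x ∈ 𝒜 i → y ∈ 𝒜 j →
    D (x * y) = D x * y + (-1 : k) ^ i • (x * D y)

def GeneratesBracket (br : A → A → A) (Δ : A →ₗ[k] A) : Prop :=
  ∀ ⦃i j : ℤ⦄ ⦃x y : A⦄, x ∈ 𝒜 i → y ∈ 𝒜 j →
    Δ (x * y) - Δ x * y - (-1 : k) ^ i • (x * Δ y) = (-1 : k) ^ i • br x y

variable {𝒜}

lemma IsEvenDerivation.add {D E : A →ₗ[k] A} (hD : IsEvenDerivation 𝒜 D)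
    (hE : IsEvenDerivation 𝒜 E) : IsEvenDerivation 𝒜 (D + E) := by
  intro i j x y hx hy
  simp only [LinearMap.add_apply, hD hx hy, hE hx hy, add_mul, mul_add]
  abel

lemma GeneratesBracket.map_mul {br : A → A → A} {Δ : A →ₗ[k] A} (hΔ : GeneratesBracket 𝒜 br Δ)
    {i j : ℤ} {x y : A} (hx : x ∈ 𝒜 i) (hy : y ∈ 𝒜 j) :
    Δ (x * y) = Δ x * y + (-1 : k) ^ i • (x * Δ y) + (-1 : k) ^ i • br x y := by
  rw [← hΔ hx hy]
  abel

lemma GeneratesBracket.add_oddDerivation {br : A → A → A} {Δ ω : A →ₗ[k] A}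
    (hΔ : GeneratesBracket 𝒜 br Δ) (hω : IsOddDerivation 𝒜 ω) :
    GeneratesBracket 𝒜 br (Δ + ω) := by
  intro i j x y hx hy
  simp only [LinearMap.add_apply, hΔ.map_mul hx hy, hω hx hy, add_mul, mul_add, smul_add]
  abel

section OddDerivation

variable {ω : A →ₗ[k] A} (hω : IsOddDerivation 𝒜 ω)
include hω

lemma IsOddDerivation.map_mul_of_mem_sub_one {i j : ℤ} {x y : A} (hx : x ∈ 𝒜 (i - 1))
    (hy : y ∈ 𝒜 j) : ω (x * y) = ω x * y - (-1 : k) ^ i • (x * ω y) := by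
  rw [hω hx hy, neg_one_zpow_sub_one, neg_smul, sub_eq_add_neg]

variable (hωdeg : ∀ (i : ℤ) (x : A), x ∈ 𝒜 i → ω x ∈ 𝒜 (i - 1))
include hωdeg

lemma IsOddDerivation.comp_self : IsEvenDerivation 𝒜 (ω ∘ₗ ω) := by
  intro i j x y hx hy
  simp only [LinearMap.comp_apply, hω hx hy, map_add, map_smul,
    hω.map_mul_of_mem_sub_one (hωdeg i x hx) hy, hω hx (hωdeg j y hy), smul_add, smul_smul,
    neg_one_zpow_mul_self, one_smul]
  module

lemma IsOddDerivation.anticommutator {br : A → A → A} {Δ : A →ₗ[k] A}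
    (hΔ : GeneratesBracket 𝒜 br Δ) (hΔdeg : ∀ (i : ℤ) (x : A), x ∈ 𝒜 i → Δ x ∈ 𝒜 (i - 1))
    (hωbr : ∀ (i j : ℤ) (x y : A), x ∈ 𝒜 i → y ∈ 𝒜 j →
      ω (br x y) = br (ω x) y + (-1 : k) ^ (i - 1) • br x (ω y)) :
    IsEvenDerivation 𝒜 (Δ ∘ₗ ω + ω ∘ₗ Δ) := by
  intro i j x y hx hy
  have hΔω : Δ (ω (x * y)) = Δ (ω x) * y - (-1 : k) ^ i • (ω x * Δ y)
      - (-1 : k) ^ i • br (ω x) y + (-1 : k) ^ i • (Δ x * ω y) + x * Δ (ω y) + br x (ω y) := by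
    simp only [hω hx hy, map_add, map_smul, hΔ.map_mul (hωdeg i x hx) hy,
      hΔ.map_mul hx (hωdeg j y hy), neg_one_zpow_sub_one, smul_add, smul_smul,
      neg_one_zpow_mul_self, one_smul]
    module
  have hωΔ : ω (Δ (x * y)) = ω (Δ x) * y - (-1 : k) ^ i • (Δ x * ω y)
      + (-1 : k) ^ i • (ω x * Δ y) + x * ω (Δ y) + (-1 : k) ^ i • br (ω x) y - br x (ω y) := by
    simp only [hΔ.map_mul hx hy, map_add, map_smul,
      hω.map_mul_of_mem_sub_one (hΔdeg i x hx) hy, hω hx (hΔdeg j y hy),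
      hωbr i j x y hx hy, neg_one_zpow_sub_one, smul_add, smul_smul, mul_neg,
      neg_one_zpow_mul_self, one_smul]
    module
  simp only [LinearMap.add_apply, LinearMap.comp_apply, hΔω, hωΔ, add_mul, mul_add]
  abel

end OddDerivation

end

/-- torsor property, translation: if `Δ` is a quasi-BV structure and
`ω` is a closed 1-form (a degree `−1` linear map which is a derivation of both the
product and the bracket), then `Δ + ω` is again a quasi-BV structure. -/
theorem qBV_translate_by_closed_one_form
    (k A : Type) [Field k] [CharZero k] [Ring A] [Algebra k A]
    (𝒜 : ℤ → Submodule k A) [GradedAlgebra 𝒜]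
    (G : GerstenhaberBracket k A 𝒜)
    (Δ ω : A →ₗ[k] A)
    (hdeg : ∀ (i : ℤ) (x : A), x ∈ 𝒜 i → Δ x ∈ 𝒜 (i - 1))
    (hBV1 : ∀ (i j : ℤ) (x y : A), x ∈ 𝒜 i → y ∈ 𝒜 j →
      Δ (x * y) - Δ x * y - ((-1 : k) ^ i) • (x * Δ y) = ((-1 : k) ^ i) • G.br x y)
    (hqBV2 : ∀ (i j : ℤ) (x y : A), x ∈ 𝒜 i → y ∈ 𝒜 j →
      Δ (Δ (x * y)) = Δ (Δ x) * y + x * Δ (Δ y))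
    (hωdeg : ∀ (i : ℤ) (x : A), x ∈ 𝒜 i → ω x ∈ 𝒜 (i - 1))
    (hωmul : ∀ (i j : ℤ) (x y : A), x ∈ 𝒜 i → y ∈ 𝒜 j →
      ω (x * y) = ω x * y + ((-1 : k) ^ i) • (x * ω y))
    (hωbr : ∀ (i j : ℤ) (x y : A), x ∈ 𝒜 i → y ∈ 𝒜 j →
      ω (G.br x y) = G.br (ω x) y + ((-1 : k) ^ (i - 1)) • G.br x (ω y)) :
    (∀ (i : ℤ) (x : A), x ∈ 𝒜 i → (Δ + ω) x ∈ 𝒜 (i - 1)) ∧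
    (∀ (i j : ℤ) (x y : A), x ∈ 𝒜 i → y ∈ 𝒜 j →
      (Δ + ω) (x * y) - (Δ + ω) x * y - ((-1 : k) ^ i) • (x * (Δ + ω) y)
        = ((-1 : k) ^ i) • G.br x y) ∧
    (∀ (i j : ℤ) (x y : A), x ∈ 𝒜 i → y ∈ 𝒜 j →
      (Δ + ω) ((Δ + ω) (x * y))
        = (Δ + ω) ((Δ + ω) x) * y + x * (Δ + ω) ((Δ + ω) y)) := by
  have hΔ : GeneratesBracket 𝒜 (fun x y => G.br x y) Δ := hBV1
  have hω : IsOddDerivation 𝒜 ω := hωmul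
  have hsq : (Δ + ω) ∘ₗ (Δ + ω) = Δ ∘ₗ Δ + (Δ ∘ₗ ω + ω ∘ₗ Δ) + ω ∘ₗ ω := by
    simp only [LinearMap.comp_add, LinearMap.add_comp]
    abel
  have hqBV2' : IsEvenDerivation 𝒜 ((Δ + ω) ∘ₗ (Δ + ω)) := by
    rw [hsq]
    exact ((show IsEvenDerivation 𝒜 (Δ ∘ₗ Δ) from hqBV2).add
      (hω.anticommutator hωdeg hΔ hdeg hωbr)).add (hω.comp_self hωdeg)
  exact ⟨fun i x hx => add_mem (hdeg i x hx) (hωdeg i x hx),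
    fun _ _ _ _ hx hy => hΔ.add_oddDerivation hω hx hy,
    fun _ _ _ _ hx hy => hqBV2' hx hy⟩
end
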